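/- arXiv:1811.04233 — 11 statements merged into one kernel-verified Lean document; each statement's English description precedes it below -/
import Mathlib

section
/- Let e_min ≤ e_max be integers and let a ≥ 0 be a real number. Let ã = MLA(a) be the multi-power logarithmic approximation of a with exponent range {e_min, …, e_max}, and let n_s be the cardinality of the set of integers e with e_min ≤ e ≤ e_max such that ⌊ã / 2^e⌋ is odd (n_s is the number of spikes of the multi-spike logarithmic temporal coding spike train encoding a). Then: (i) if a < 2^{e_min}, then n_s = 0; (ii) if 2^{e_min} ≤ a < 2^{e_max+1}, then n_s ≤ ⌊log₂ a⌋ − e_min + 1, where ⌊log₂ a⌋ denotes Int.log 2 a; (iii) if a ≥ 2^{e_max+1}, then n_s = e_max − e_min + 1. -/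
/-- The multi-power logarithmic approximation of a real number `a ≥ 0`
with exponent range `{emin, …, emax}`. -/
noncomputable def MLA (emin emax : ℤ) (a : ℝ) : ℝ :=
  if a < (2:ℝ)^emin then 0
  else if a < (2:ℝ)^(emax+1) then (⌊a / (2:ℝ)^emin⌋ : ℝ) * (2:ℝ)^emin
  else (2:ℝ)^(emax+1) - (2:ℝ)^emin

lemma floor_intCast_div_nat_real (m : ℤ) (d : ℕ) : ⌊(m : ℝ) / (d : ℝ)⌋ = m / (d : ℤ) := by
  rw [← Rat.floor_intCast_div_natCast m d, ← Rat.floor_cast (α := ℝ), Rat.cast_div,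
    Rat.cast_intCast, Rat.cast_natCast]

theorem spike_count_bound_multi_spike_LTC
    (emin emax : ℤ) (h : emin ≤ emax) (a : ℝ) (ha : 0 ≤ a) (ns : ℕ)
    (hns : ns = ((Finset.Icc emin emax).filter
      (fun e => Odd ⌊MLA emin emax a / (2:ℝ)^e⌋)).card) :
    (a < (2:ℝ)^emin → ns = 0) ∧
    ((2:ℝ)^emin ≤ a → a < (2:ℝ)^(emax+1) →
      (ns : ℤ) ≤ Int.log 2 a - emin + 1) ∧
    ((2:ℝ)^(emax+1) ≤ a → (ns : ℤ) = emax - emin + 1) := by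
  refine ⟨?_, ?_, ?_⟩
  · intro hlt
    have hM : MLA emin emax a = 0 := by simp [MLA, hlt]
    simp only [hns, hM, zero_div, Int.floor_zero]
    simp [Int.not_odd_iff_even]
  · intro h1 h2'
    set m := ⌊a / (2:ℝ)^emin⌋ with hm
    have hpos : (0:ℝ) < 2^emin := zpow_pos two_pos _
    have hM : MLA emin emax a = (m:ℝ) * 2^emin := by
      rw [MLA, if_neg (not_lt.2 h1), if_pos h2']
    have hm1 : 1 ≤ m := Int.le_floor.2 (by rw [Int.cast_one]; exact (one_le_div hpos).2 h1)
    have ha' : 0 < a := lt_of_lt_of_le hpos h1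
    have hloge : emin ≤ Int.log 2 a := by
      rw [← Int.zpow_le_iff_le_log one_lt_two ha']
      exact_mod_cast h1
    have key : ((Finset.Icc emin emax).filter
        (fun e => Odd ⌊MLA emin emax a / (2:ℝ)^e⌋)) ⊆ Finset.Icc emin (Int.log 2 a) := by
      intro e he
      simp only [Finset.mem_filter, Finset.mem_Icc] at he ⊢
      obtain ⟨⟨he1, _⟩, hodd⟩ := he
      refine ⟨he1, ?_⟩
      set k := (e - emin).toNat with hk
      have hek : e = emin + (k : ℤ) := by
        rw [hk, Int.toNat_of_nonneg (by omega)]; ring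
      have hfloor : ⌊MLA emin emax a / (2:ℝ)^e⌋ = m / (2^k : ℤ) := by
        rw [hM, hek]
        have : (m:ℝ) * 2^emin / 2^(emin + (k:ℤ)) = (m:ℝ) / ((2^k : ℕ) : ℝ) := by
          rw [zpow_add₀ (two_ne_zero), zpow_natCast]
          push_cast
          field_simp
        rw [this, floor_intCast_div_nat_real]
        push_cast
        ring_nf
      rw [hfloor] at hodd
      have hne : m / (2^k : ℤ) ≠ 0 := by
        intro h0; rw [h0] at hodd; exact ((Int.not_odd_iff_even.2 Even.zero)) hodd
      have hdivpos : 1 ≤ m / (2^k : ℤ) := by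
        have : 0 ≤ m / (2^k : ℤ) := Int.ediv_nonneg (by omega) (by positivity)
        omega
      have h2km : (2:ℤ)^k ≤ m := by
        have := Int.le_ediv_iff_mul_le (b := m) (c := (2:ℤ)^k) (by positivity) |>.1 hdivpos
        simpa using this
      have hle : (2:ℝ)^e ≤ a := by
        rw [hek, zpow_add₀ (two_ne_zero)]
        have hma : (m:ℝ) * 2^emin ≤ a := by
          rw [hm]
          have := Int.floor_le (a / (2:ℝ)^emin)
          calc (⌊a / (2:ℝ)^emin⌋:ℝ) * 2^emin ≤ (a / (2:ℝ)^emin) * 2^emin := by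
                exact mul_le_mul_of_nonneg_right this hpos.le
            _ = a := by field_simp
        calc (2:ℝ)^emin * 2^(k:ℤ) ≤ 2^emin * (m:ℝ) := by
              apply mul_le_mul_of_nonneg_left _ hpos.le
              rw [zpow_natCast]
              exact_mod_cast h2km
          _ = (m:ℝ) * 2^emin := by ring
          _ ≤ a := hma
      rw [← Int.zpow_le_iff_le_log one_lt_two ha']
      exact_mod_cast hle
    have hcard : ns ≤ (Finset.Icc emin (Int.log 2 a)).card := by
      rw [hns]; exact Finset.card_le_card key
    rw [Int.card_Icc] at hcard
    have := Int.toNat_of_nonneg (a := Int.log 2 a + 1 - emin) (by omega)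
    omega
  · intro hge
    have hpos : (0:ℝ) < 2^emin := zpow_pos two_pos _
    have hlt : (2:ℝ)^emin < 2^(emax+1) := by
      apply zpow_lt_zpow_right₀ one_lt_two; omega
    have hM : MLA emin emax a = (2:ℝ)^(emax+1) - 2^emin := by
      rw [MLA, if_neg (not_lt.2 (le_trans hlt.le hge)), if_neg (not_lt.2 hge)]
    have hfilter : ((Finset.Icc emin emax).filter
        (fun e => Odd ⌊MLA emin emax a / (2:ℝ)^e⌋)) = Finset.Icc emin emax := by
      apply Finset.filter_true_of_mem
      intro e he
      simp only [Finset.mem_Icc] at he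
      obtain ⟨he1, he2⟩ := he
      obtain ⟨q, hq⟩ : ∃ q : ℕ, emax + 1 - e = (q : ℤ) + 1 := by
        refine ⟨(emax - e).toNat, ?_⟩
        rw [Int.toNat_of_nonneg (by omega)]; ring
      have hval : MLA emin emax a / (2:ℝ)^e = 2^(emax+1-e) - 2^(emin-e) := by
        rw [hM, sub_div, ← zpow_sub₀ (two_ne_zero), ← zpow_sub₀ (two_ne_zero)]
      have hsmall : (0:ℝ) < 2^(emin-e) ∧ (2:ℝ)^(emin-e) ≤ 1 := by
        constructor
        · positivity
        · apply zpow_le_one_of_nonpos₀ one_le_two; omega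
      have hfloor : ⌊MLA emin emax a / (2:ℝ)^e⌋ = 2^(q+1) - 1 := by
        rw [hval, hq]
        apply Int.floor_eq_iff.2
        constructor
        · push_cast
          rw [← zpow_natCast (2:ℝ) (q+1)]
          push_cast
          linarith [hsmall.2]
        · push_cast
          rw [← zpow_natCast (2:ℝ) (q+1)]
          push_cast
          linarith [hsmall.1]
      rw [hfloor]
      exact ⟨2^q - 1, by ring⟩
    rw [hns, hfilter, Int.card_Icc]
    have := Int.toNat_of_nonneg (a := emax + 1 - emin) (by omega)
    omega
end

section
/- Let e_min ≤ e_max be integers and let a ≥ 0 be a real number, and let ã = MLA(a) be the multi-power logarithmic approximation of a with exponent range {e_min, …, e_max}. Then ã is exactly the sum of distinct powers of two with exponents in the range: ã = Σ_{e ∈ S} 2^e, where S is the set of integers e with e_min ≤ e ≤ e_max such that ⌊ã / 2^e⌋ is odd. -/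
open Finset

theorem Nat.sum_range_filter_odd_div_two_pow (n m : ℕ) :
    ∑ i ∈ range m with Odd (n / 2 ^ i), 2 ^ i = n % 2 ^ m := by
  induction m with
  | zero => simp [Nat.mod_one]
  | succ m ih =>
    rw [sum_filter, sum_range_succ, ← sum_filter, ih, pow_succ, Nat.mod_mul]
    rcases Nat.even_or_odd (n / 2 ^ m) with h | h
    · simp [Nat.even_iff.mp h, Nat.not_odd_iff_even.mpr h]
    · simp [Nat.odd_iff.mp h, h]

theorem Int.floor_natCast_mul_zpow_div_zpow_add {K : Type*} [Field K] [LinearOrder K]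
    [IsStrictOrderedRing K] [FloorRing K] {b : ℕ} (hb : b ≠ 0) (n i : ℕ) (k : ℤ) :
    ⌊(n : K) * (b : K) ^ k / (b : K) ^ (k + i)⌋ = ((n / b ^ i : ℕ) : ℤ) := by
  have hbK : (b : K) ≠ 0 := Nat.cast_ne_zero.mpr hb
  have : (n : K) * (b : K) ^ k / (b : K) ^ (k + i) = (n : K) / ((b ^ i : ℕ) : K) := by
    rw [zpow_add₀ hbK, zpow_natCast]; push_cast; field_simp
  rw [this, Int.floor_div_natCast, Int.floor_natCast]
  push_cast; rfl

theorem natCast_mul_two_zpow_eq_sum (k : ℤ) {m n : ℕ} (hn : n < 2 ^ m) :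
    (n : ℝ) * 2 ^ k = ∑ e ∈ Ico k (k + m) with Odd ⌊(n : ℝ) * 2 ^ k / 2 ^ e⌋, (2 : ℝ) ^ e := by
  have hIco : Ico k (k + m) = (range m).image (fun i : ℕ => k + i) := by
    ext e; simp only [mem_Ico, mem_image, mem_range]
    exact ⟨fun he => ⟨(e - k).toNat, by omega, by omega⟩, by rintro ⟨i, hi, rfl⟩; omega⟩
  have hfloor (i : ℕ) : ⌊(n : ℝ) * 2 ^ k / 2 ^ (k + i)⌋ = ((n / 2 ^ i : ℕ) : ℤ) := by
    exact_mod_cast Int.floor_natCast_mul_zpow_div_zpow_add (K := ℝ) two_ne_zero n i k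
  rw [hIco, filter_image, sum_image (by intro i _ j _ hij; simpa using hij)]
  simp only [hfloor, Int.odd_coe_nat]
  simp only [zpow_add₀ (two_ne_zero' ℝ), zpow_natCast, ← mul_sum]
  rw [mul_comm]
  congr 1
  exact_mod_cast ((Nat.sum_range_filter_odd_div_two_pow n m).trans (Nat.mod_eq_of_lt hn)).symm

theorem MLA_eq_natCast_mul {emin emax : ℤ} {m : ℕ} (hm : emax + 1 = emin + m) (a : ℝ) :
    ∃ n : ℕ, n < 2 ^ m ∧ MLA emin emax a = n * 2 ^ emin := by
  have h2pos : (0 : ℝ) < 2 ^ emin := by positivity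
  have htop : (2 : ℝ) ^ (emax + 1) = (2 ^ m : ℕ) * 2 ^ emin := by
    rw [hm, zpow_add₀ two_ne_zero, zpow_natCast, mul_comm]; push_cast; rfl
  unfold MLA
  split_ifs with hlow hhigh
  · exact ⟨0, Nat.two_pow_pos m, by simp⟩
  · have hfloor : 0 ≤ ⌊a / 2 ^ emin⌋ := Int.floor_nonneg.mpr (by
      rw [le_div_iff₀ h2pos]; linarith [not_lt.mp hlow])
    lift ⌊a / 2 ^ emin⌋ to ℕ using hfloor with n hn
    refine ⟨n, ?_, rfl⟩
    have hlt : ⌊a / 2 ^ emin⌋ < ((2 ^ m : ℕ) : ℤ) :=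
      Int.floor_lt.mpr (by rwa [Int.cast_natCast, div_lt_iff₀ h2pos, ← htop])
    rw [← hn] at hlt
    exact_mod_cast hlt
  · refine ⟨2 ^ m - 1, Nat.sub_lt (Nat.two_pow_pos m) one_pos, ?_⟩
    rw [htop, Nat.cast_sub Nat.one_le_two_pow]
    push_cast; ring

theorem MLA_eq_sum_of_distinct_powers_general
    (emin emax : ℤ) (h : emin ≤ emax) (a : ℝ) :
    MLA emin emax a =
      ∑ e ∈ (Finset.Icc emin emax).filter
        (fun e => Odd ⌊MLA emin emax a / (2:ℝ)^e⌋), (2:ℝ)^e := by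
  obtain ⟨m, hm⟩ : ∃ m : ℕ, emax + 1 = emin + m := ⟨(emax + 1 - emin).toNat, by omega⟩
  obtain ⟨n, hn, hMLA⟩ := MLA_eq_natCast_mul hm a
  have hIcc : Icc emin emax = Ico emin (emin + m) := by ext; simp only [mem_Icc, mem_Ico]; omega
  rw [hIcc, hMLA]
  exact natCast_mul_two_zpow_eq_sum emin hn

theorem MLA_eq_sum_of_distinct_powers
    (emin emax : ℤ) (h : emin ≤ emax) (a : ℝ) (ha : 0 ≤ a) :
    MLA emin emax a =
      ∑ e ∈ (Finset.Icc emin emax).filter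
        (fun e => Odd ⌊MLA emin emax a / (2:ℝ)^e⌋), (2:ℝ)^e :=
  MLA_eq_sum_of_distinct_powers_general emin emax h a
end

section
/- Let e_min ≤ e_max be integers, let a be a real number with 2^{e_min} ≤ a < 2^{e_max+1}, and let e be an integer with e ≥ e_min. Then ⌊MLA(a) / 2^e⌋ = ⌊a / 2^e⌋, where MLA(a) is the multi-power logarithmic approximation of a with exponent range {e_min, …, e_max}; in particular, for every e with e_min ≤ e ≤ e_max, the power 2^e contributes to MLA(a) (i.e., ⌊MLA(a)/2^e⌋ is odd) if and only if ⌊a/2^e⌋ is odd. -/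
lemma floor_floor_div_pow (x : ℝ) (n : ℕ) :
    ⌊(⌊x⌋ : ℝ) / (2:ℝ)^n⌋ = ⌊x / (2:ℝ)^n⌋ := by
  have h2 : (0:ℝ) < 2^n := by positivity
  set m := ⌊(⌊x⌋ : ℝ) / (2:ℝ)^n⌋ with hm
  have h1 : (m : ℝ) ≤ (⌊x⌋ : ℝ) / 2^n := Int.floor_le _
  have h1' : (⌊x⌋ : ℝ) / 2^n < m + 1 := Int.lt_floor_add_one _
  have hle : (m : ℝ) * 2^n ≤ (⌊x⌋ : ℝ) := by
    rw [← le_div_iff₀ h2]; exact h1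
  have hlt : (⌊x⌋ : ℝ) < ((m : ℝ) + 1) * 2^n := by
    rw [← div_lt_iff₀ h2]; exact h1'
  have hle2 : (m : ℝ) * 2^n ≤ x := by
    calc (m : ℝ) * 2^n ≤ (⌊x⌋ : ℝ) := hle
      _ ≤ x := Int.floor_le x
  have hlt2 : x < ((m : ℝ) + 1) * 2^n := by
    have : ⌊x⌋ < (m + 1) * 2^n := by exact_mod_cast (by push_cast; exact hlt : ((⌊x⌋:ℤ):ℝ) < (((m+1) * 2^n : ℤ) : ℝ))
    have := Int.floor_lt.mp this
    push_cast at this ⊢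
    linarith
  symm
  rw [Int.floor_eq_iff]
  constructor
  · rw [le_div_iff₀ h2]; exact hle2
  · rw [div_lt_iff₀ h2]; push_cast; exact hlt2

theorem MLA_floor_eq_floor
    (emin emax : ℤ) (h : emin ≤ emax) (a : ℝ)
    (ha : (2:ℝ)^emin ≤ a) (ha' : a < (2:ℝ)^(emax+1)) :
    (∀ e : ℤ, emin ≤ e → ⌊MLA emin emax a / (2:ℝ)^e⌋ = ⌊a / (2:ℝ)^e⌋) ∧
    (∀ e : ℤ, emin ≤ e → e ≤ emax →
      (Odd ⌊MLA emin emax a / (2:ℝ)^e⌋ ↔ Odd ⌊a / (2:ℝ)^e⌋)) := by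
  have hMLA : MLA emin emax a = (⌊a / (2:ℝ)^emin⌋ : ℝ) * (2:ℝ)^emin := by
    rw [MLA, if_neg (not_lt.mpr ha), if_pos ha']
  have key : ∀ e : ℤ, emin ≤ e → ⌊MLA emin emax a / (2:ℝ)^e⌋ = ⌊a / (2:ℝ)^e⌋ := by
    intro e he
    set k := (e - emin).toNat with hk
    have hek : e = emin + k := by omega
    have hpow : (2:ℝ)^e = (2:ℝ)^emin * (2:ℝ)^k := by
      rw [hek, zpow_add₀ (two_ne_zero), zpow_natCast]
    have hemin : (0:ℝ) < (2:ℝ)^emin := by positivity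
    have h1 : MLA emin emax a / (2:ℝ)^e = (⌊a / (2:ℝ)^emin⌋ : ℝ) / (2:ℝ)^k := by
      rw [hMLA, hpow]
      field_simp
    have h2 : a / (2:ℝ)^e = (a / (2:ℝ)^emin) / (2:ℝ)^k := by
      rw [hpow, div_div]
    rw [h1, h2, floor_floor_div_pow]
  exact ⟨key, fun e he _ => by rw [key e he]⟩
end

section
/- (Lemma 1: input integration recovers the weighted sum of logarithmic approximations.) Let e_min ≤ e_max be integers and T = e_max − e_min + 1. Let ι be a finite index set (the synapses), w : ι → ℝ the synaptic weights, and for each i ∈ ι let F i be a finite set of natural numbers contained in {0, 1, …, T−1} (the input spike times). Define the input current I : ℕ → ℝ by I t = Σ_{i ∈ ι, t ∈ F i} w i, and define the membrane potential v : ℕ → ℝ recursively by v 0 = 2^{e_min} · I 0 and v (t+1) = 2 · v t + 2^{e_min} · I (t+1) (exponentially growing postsynaptic potentials, no firing). Then v (T−1) = Σ_{i ∈ ι} w i · ã_i, where ã_i = Σ_{t ∈ F i} 2^{e_max − t} is the real value encoded by the spike train F i under logarithmic temporal coding. -/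
/-- Lemma 1: input integration of an EF neuron recovers the weighted sum of
the logarithmic approximations encoded by the input LTC spike trains. -/
theorem EF_input_integration
    (emin emax : ℤ) (h : emin ≤ emax) (T : ℕ) (hT : (T : ℤ) = emax - emin + 1)
    (ι : Type*) [Fintype ι] (w : ι → ℝ) (F : ι → Finset ℕ)
    (hF : ∀ i, F i ⊆ Finset.range T)
    (I : ℕ → ℝ) (hI : ∀ t, I t = ∑ i, if t ∈ F i then w i else 0)
    (v : ℕ → ℝ) (hv0 : v 0 = (2:ℝ)^emin * I 0)
    (hv : ∀ t, v (t+1) = 2 * v t + (2:ℝ)^emin * I (t+1)) :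
    v (T-1) = ∑ i, w i * ∑ t ∈ F i, (2:ℝ)^(emax - (t:ℤ)) := by
  have key : ∀ n, v n = ∑ s ∈ Finset.range (n+1), (2:ℝ)^(n-s) * ((2:ℝ)^emin * I s) := by
    intro n
    induction n with
    | zero => simp [hv0]
    | succ n ih =>
      rw [hv n, ih, Finset.mul_sum, Finset.sum_range_succ _ (n+1)]
      simp only [Nat.sub_self, pow_zero, one_mul]
      congr 1
      apply Finset.sum_congr rfl
      intro s hs
      rw [Finset.mem_range] at hs
      have : n + 1 - s = (n - s) + 1 := by omega
      rw [this, pow_succ]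
      ring
  have hTsub : T - 1 + 1 = T := by omega
  rw [key (T-1), hTsub]
  simp only [hI, Finset.mul_sum, mul_ite, mul_zero]
  rw [Finset.sum_comm]
  apply Finset.sum_congr rfl
  intro i _
  rw [Finset.sum_ite_mem, Finset.inter_eq_right.mpr (hF i)]
  apply Finset.sum_congr rfl
  intro s hs
  have hsT : s < T := Finset.mem_range.mp (hF i hs)
  have hc : (2:ℝ)^(T-1-s) * (2:ℝ)^emin = (2:ℝ)^(emax - (s:ℤ)) := by
    rw [← zpow_natCast (2:ℝ) (T-1-s), ← zpow_add₀ (by norm_num : (2:ℝ) ≠ 0)]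
    congr 1
    omega
  rw [← hc]
  ring
end

section
/- (Lemma 2, multi-spike case: an exponentiate-and-fire neuron with reset-by-subtraction generates the multi-spike LTC spike train of its initial potential.) Let E be an integer, T ≥ 1 a natural number, and V₀ a real number. Define the multi-spike EF dynamics u : ℕ → ℝ and s : ℕ → Bool by u 0 = V₀, s k = (u k ≥ 2^E), and u (k+1) = 2 · (u k − (if s k then 2^E else 0)). Then Σ_{k=0}^{T−1} (if s k then 2^{E−k} else 0) = MLA(max(V₀, 0)), where MLA is the multi-power logarithmic approximation with exponent range {E−(T−1), …, E}. -/
/-- Lemma 2, multi-spike case: a multi-spike EF neuron (doubling potential,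
threshold `2^E`, reset by subtraction) generates the multi-spike LTC spike
train encoding `max V₀ 0` with exponent range `{E−(T−1), …, E}`. -/
theorem multi_spike_EF_generates_multi_spike_LTC
    (E : ℤ) (T : ℕ) (hT : 1 ≤ T) (V₀ : ℝ)
    (u : ℕ → ℝ) (s : ℕ → Bool)
    (hu0 : u 0 = V₀)
    (hs : ∀ k, s k = true ↔ (2:ℝ)^E ≤ u k)
    (hu : ∀ k, u (k+1) = 2 * (u k - (if s k then (2:ℝ)^E else 0))) :
    ∑ k ∈ Finset.range T, (if s k then (2:ℝ)^(E - (k:ℤ)) else 0)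
      = MLA (E - ((T:ℤ) - 1)) E (max V₀ 0) := by
  have h2 : (0:ℝ) < 2 := by norm_num
  have h2e : ∀ k : ℕ, (0:ℝ) < 2 ^ k := fun k => pow_pos h2 k
  have h2z : ∀ m : ℤ, (0:ℝ) < (2:ℝ) ^ m := fun m => zpow_pos h2 m
  set a := max V₀ 0 with ha
  -- rewrite the zpow terms with nat powers in the denominator
  have hpow : ∀ j : ℕ, (2:ℝ)^(E - (j:ℤ)) = (2:ℝ)^E / 2^j := by
    intro j
    rw [zpow_sub₀ (by norm_num : (2:ℝ) ≠ 0), zpow_natCast]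
  have hmin : (2:ℝ)^(E - ((T:ℤ) - 1)) = (2:ℝ)^E * 2 / 2^T := by
    rw [show E - ((T:ℤ) - 1) = (E + 1) - (T:ℤ) by ring,
      zpow_sub₀ (by norm_num : (2:ℝ) ≠ 0), zpow_natCast,
      zpow_add₀ (by norm_num : (2:ℝ) ≠ 0), zpow_one]
  have hE1 : (2:ℝ)^(E + 1) = (2:ℝ)^E * 2 := by
    rw [zpow_add₀ (by norm_num : (2:ℝ) ≠ 0), zpow_one]
  -- Lemma A: closed form for u
  have hA : ∀ k : ℕ, u k =
      2^k * (V₀ - ∑ j ∈ Finset.range k, (if s j then (2:ℝ)^E / 2^j else 0)) := by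
    intro k
    induction k with
    | zero => simp [hu0]
    | succ k ih =>
      rw [hu k, ih, Finset.sum_range_succ]
      cases hsk : s k with
      | true =>
        rw [if_pos rfl, if_pos rfl]
        field_simp
        ring
      | false =>
        rw [if_neg (by simp [hsk]), if_neg (by simp [hsk])]
        ring
  -- the sum in the goal, rewritten
  have hsum : ∑ k ∈ Finset.range T, (if s k then (2:ℝ)^(E - (k:ℤ)) else 0)
      = ∑ k ∈ Finset.range T, (if s k then (2:ℝ)^E / 2^k else 0) := by
    refine Finset.sum_congr rfl fun k _ => ?_
    rw [hpow k]
  rw [hsum]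
  rcases lt_or_ge a ((2:ℝ)^(E - ((T:ℤ) - 1))) with hc1 | hc1
  · -- Case 1: a below the smallest power: no spikes
    have hV : V₀ < (2:ℝ)^E * 2 / 2^T := by
      calc V₀ ≤ a := le_max_left _ _
        _ < _ := by rw [← hmin]; exact hc1
    have hfalse : ∀ k, k < T → s k = false := by
      intro k
      induction k using Nat.strong_induction_on with
      | _ k ih =>
        intro hkT
        have hS0 : ∑ j ∈ Finset.range k, (if s j then (2:ℝ)^E / 2^j else 0) = 0 := by
          refine Finset.sum_eq_zero fun j hj => ?_
          have := ih j (Finset.mem_range.mp hj) (lt_trans (Finset.mem_range.mp hj) hkT)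
          simp [this]
        have huk : u k = 2^k * V₀ := by rw [hA k, hS0]; ring
        have hlt : u k < (2:ℝ)^E := by
          rw [huk]
          have h1 : (2:ℝ)^k * V₀ < 2^k * ((2:ℝ)^E * 2 / 2^T) :=
            (mul_lt_mul_iff_right₀ (h2e k)).mpr hV
          have h2' : (2:ℝ)^k * ((2:ℝ)^E * 2 / 2^T) ≤ (2:ℝ)^E := by
            have heq : (2:ℝ)^k * ((2:ℝ)^E * 2 / 2^T)
                = (2:ℝ)^E * ((2:ℝ)^(k+1) / 2^T) := by
              rw [pow_succ]; ring
            rw [heq]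
            calc (2:ℝ)^E * ((2:ℝ)^(k+1) / 2^T) ≤ (2:ℝ)^E * 1 := by
                  refine mul_le_mul_of_nonneg_left ?_ (le_of_lt (h2z E))
                  rw [div_le_one (h2e T)]
                  exact pow_le_pow_right₀ (by norm_num) (by omega)
              _ = (2:ℝ)^E := mul_one _
          linarith
        exact Bool.eq_false_iff.mpr (fun hh => (not_le.mpr hlt) ((hs k).mp hh))
    have : ∑ k ∈ Finset.range T, (if s k then (2:ℝ)^E / 2^k else 0) = 0 := by
      refine Finset.sum_eq_zero fun k hk => ?_
      simp [hfalse k (Finset.mem_range.mp hk)]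
    rw [this, MLA, if_pos hc1]
  rcases lt_or_ge a ((2:ℝ)^(E + 1)) with hc2 | hc2
  · -- Case 3: in range, greedy binary expansion
    have hV0 : 0 ≤ V₀ := by
      by_contra h
      push_neg at h
      have : a = 0 := max_eq_right h.le
      rw [this] at hc1
      exact absurd hc1 (not_le.mpr (h2z _))
    have haV : a = V₀ := max_eq_left hV0
    rw [haV] at hc1 hc2
    -- boundedness invariant
    have hbound : ∀ k, 0 ≤ u k ∧ u k < (2:ℝ)^(E+1) := by
      intro k
      induction k with
      | zero => rw [hu0]; exact ⟨hV0, hc2⟩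
      | succ k ih =>
        rw [hu k]
        cases hsk : s k with
        | false =>
          have hlt : u k < (2:ℝ)^E := by
            by_contra hle
            push_neg at hle
            rw [(hs k).mpr hle] at hsk
            exact Bool.noConfusion hsk
          rw [if_neg (by simp [hsk])]
          constructor
          · linarith [ih.1]
          · rw [hE1]; linarith
        | true =>
          have hge : (2:ℝ)^E ≤ u k := (hs k).mp hsk
          rw [if_pos rfl]
          constructor
          · linarith
          · have := ih.2
            rw [hE1] at this ⊢
            linarith
    -- the sum is a natural multiple of 2^(E+1-T)
    set n : ℕ := ∑ k ∈ Finset.range T, (if s k then 2^(T-1-k) else 0) with hn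
    have hSn : ∑ k ∈ Finset.range T, (if s k then (2:ℝ)^E / 2^k else 0)
        = (n : ℝ) * ((2:ℝ)^E * 2 / 2^T) := by
      rw [hn]
      push_cast
      rw [Finset.sum_mul]
      refine Finset.sum_congr rfl fun k hk => ?_
      have hkT : k < T := Finset.mem_range.mp hk
      cases hsk : s k with
      | false => simp [hsk]
      | true =>
        rw [if_pos rfl, if_pos rfl]
        have key : (2:ℝ)^T = 2^(T-1-k) * 2 * 2^k := by
          rw [mul_assoc, mul_comm (2:ℝ) ((2:ℝ)^k), ← pow_succ, ← pow_add]
          congr 1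
          omega
        rw [key]
        field_simp
    rw [hSn]
    -- residual bounds
    have hres : 0 ≤ V₀ - (n:ℝ) * ((2:ℝ)^E * 2 / 2^T) ∧
        V₀ - (n:ℝ) * ((2:ℝ)^E * 2 / 2^T) < (2:ℝ)^E * 2 / 2^T := by
      have h1 := (hbound T).1
      have h2' := (hbound T).2
      rw [hA T, hSn] at h1 h2'
      constructor
      · have := (mul_nonneg_iff_of_pos_left (h2e T)).mp h1
        linarith
      · rw [hE1] at h2'
        rw [lt_div_iff₀ (h2e T), mul_comm]
        exact h2'
    have hEm : (2:ℝ)^(E - ((T:ℤ)-1)) = (2:ℝ)^E * 2 / 2^T := hmin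
    have hfl : ⌊V₀ / ((2:ℝ)^E * 2 / 2^T)⌋ = (n:ℤ) := by
      have hp : (0:ℝ) < (2:ℝ)^E * 2 / 2^T := by
        rw [← hEm]; exact h2z _
      rw [Int.floor_eq_iff]
      constructor
      · rw [le_div_iff₀ hp]
        push_cast
        linarith [hres.1]
      · rw [div_lt_iff₀ hp]
        push_cast
        linarith [hres.2]
    rw [MLA, haV, if_neg (not_lt.mpr hc1), if_pos hc2, hEm, hfl]
    push_cast
    ring
  · -- Case 2: always spikes
    have hV : (2:ℝ)^(E+1) ≤ V₀ := by
      have hc2' := hc2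
      rw [ha, le_sup_iff] at hc2'
      rcases hc2' with h | h
      · exact h
      · exact absurd h (not_le.mpr (h2z _))
    have htrue : ∀ k, (2:ℝ)^(E+1) ≤ u k := by
      intro k
      induction k with
      | zero => rw [hu0]; exact hV
      | succ k ih =>
        have hge : (2:ℝ)^E ≤ u k := by rw [hE1] at ih; linarith [h2z E]
        rw [hu k, if_pos ((hs k).mpr hge)]
        rw [hE1] at ih ⊢
        linarith
    have hst : ∀ k, s k = true := fun k => (hs k).mpr (by
      have := htrue k; rw [hE1] at this; linarith [h2z E])
    have hgeo : ∀ m : ℕ, ∑ k ∈ Finset.range m, (2:ℝ)^E / 2^k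
        = (2:ℝ)^E * 2 - (2:ℝ)^E * 2 / 2^m := by
      intro m
      induction m with
      | zero => simp
      | succ m ih =>
        rw [Finset.sum_range_succ, ih, pow_succ]
        field_simp
        ring
    have hall : ∑ k ∈ Finset.range T, (if s k then (2:ℝ)^E / 2^k else 0)
        = ∑ k ∈ Finset.range T, (2:ℝ)^E / 2^k := by
      refine Finset.sum_congr rfl fun k _ => ?_
      rw [if_pos (hst k)]
    rw [hall, hgeo, MLA, if_neg, if_neg (not_lt.mpr hc2)]
    · rw [hE1, hmin]
    · push_neg
      calc (2:ℝ)^(E - ((T:ℤ)-1)) ≤ (2:ℝ)^(E+1) :=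
        zpow_le_zpow_right₀ (by norm_num) (by omega)
        _ ≤ a := hc2
end

section
/- (Theorem 1, multi-spike case: an EF neuron performs the computation of a ReLU analog neuron and encodes the result in its output LTC spike train.) Let e⁰_min ≤ e⁰_max and E_min ≤ E_max be integers with T_in = e⁰_max − e⁰_min + 1 and T_out = E_max − E_min + 1. Let ι be a finite index set, w : ι → ℝ, and for each i ∈ ι let F i be a finite set of natural numbers contained in {0, …, T_in − 1}. Define the input current I : ℕ → ℝ by I k = Σ_{i ∈ ι, k ∈ F i} w i, and define u : ℕ → ℝ and s : ℕ → Bool by u 0 = 2^{e⁰_min} · I 0, s k = (u k ≥ 2^{E_max}), and u (k+1) = 2 · (u k − (if s k then 2^{E_max} else 0)) + 2^{e⁰_min} · I (k+1). Assume s k = false for all k < T_in − 1 (no output spike before the output time window). Then Σ_{k = T_in − 1}^{T_in + T_out − 2} (if s k then 2^{E_max − (k − (T_in − 1))} else 0) = MLA(max(Σ_{i ∈ ι} w i · ã_i, 0)), where ã_i = Σ_{t ∈ F i} 2^{e⁰_max − t} and MLA is the multi-power logarithmic approximation with exponent range {E_min, …, E_max}. -/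
open Finset

section MLA

variable {e E : ℤ} {a : ℝ}

theorem floor_div_mul_eq_floor_div_two_mul_add {p : ℝ} (hp : 0 < p) (a : ℝ) :
    (⌊a / p⌋ : ℝ) * p =
      ⌊a / (2 * p)⌋ * (2 * p) + if p ≤ a - ⌊a / (2 * p)⌋ * (2 * p) then p else 0 := by
  set n := ⌊a / (2 * p)⌋
  have h2p : 0 < 2 * p := by positivity
  have hlo : (n : ℝ) * (2 * p) ≤ a := (le_div_iff₀ h2p).mp (Int.floor_le _)
  have hhi : a < (n + 1) * (2 * p) := (div_lt_iff₀ h2p).mp (Int.lt_floor_add_one _)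
  split_ifs with h
  · have hfloor : ⌊a / p⌋ = 2 * n + 1 := by
      rw [Int.floor_eq_iff, le_div_iff₀ hp, div_lt_iff₀ hp]
      push_cast
      constructor <;> linarith
    rw [hfloor]
    push_cast
    ring
  · have hfloor : ⌊a / p⌋ = 2 * n := by
      rw [Int.floor_eq_iff, le_div_iff₀ hp, div_lt_iff₀ hp]
      push_cast
      constructor <;> linarith
    rw [hfloor]
    push_cast
    ring

theorem MLA_of_lt (h : a < 2 ^ e) : MLA e E a = 0 :=
  if_pos h

theorem MLA_of_le (he : e ≤ E + 1) (h : 2 ^ (E + 1) ≤ a) : MLA e E a = 2 ^ (E + 1) - 2 ^ e := by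
  have hea : (2 : ℝ) ^ e ≤ a := (zpow_le_zpow_right₀ one_le_two he).trans h
  rw [MLA, if_neg hea.not_gt, if_neg h.not_gt]

theorem MLA_eq_floor_mul (h0 : 0 ≤ a) (h : a < 2 ^ (E + 1)) :
    MLA e E a = ⌊a / 2 ^ e⌋ * 2 ^ e := by
  have hpos : (0 : ℝ) < 2 ^ e := zpow_pos two_pos e
  rw [MLA, if_pos h]
  split_ifs with hlt
  · rw [Int.floor_eq_zero_iff.mpr ⟨by positivity, (div_lt_one hpos).mpr hlt⟩]
    simp
  · rfl

theorem MLA_add_one_self (E : ℤ) (a : ℝ) : MLA (E + 1) E a = 0 := by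
  unfold MLA
  split_ifs <;> simp

theorem MLA_max_zero (e E : ℤ) (a : ℝ) : MLA e E (max a 0) = MLA e E a := by
  have hpos : (0 : ℝ) < 2 ^ e := zpow_pos two_pos e
  rcases le_total a 0 with ha | ha
  · rw [max_eq_right ha, MLA_of_lt hpos, MLA_of_lt (ha.trans_lt hpos)]
  · rw [max_eq_left ha]

theorem MLA_sub_one (he : e ≤ E + 1) (a : ℝ) :
    MLA (e - 1) E a = MLA e E a + if 2 ^ (e - 1) ≤ a - MLA e E a then 2 ^ (e - 1) else 0 := by
  have hp : (0 : ℝ) < 2 ^ (e - 1) := zpow_pos two_pos _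
  have hdouble : (2 : ℝ) ^ e = 2 * 2 ^ (e - 1) := by
    rw [← zpow_one_add₀ two_ne_zero]
    ring_nf
  rcases lt_or_ge a 0 with hneg | hnonneg
  · rw [MLA_of_lt (hneg.trans hp), MLA_of_lt (hneg.trans (zpow_pos two_pos e)),
      if_neg (by linarith)]
    simp
  rcases lt_or_ge a (2 ^ (E + 1)) with hlt | hge
  · rw [MLA_eq_floor_mul hnonneg hlt, MLA_eq_floor_mul hnonneg hlt, hdouble]
    exact floor_div_mul_eq_floor_div_two_mul_add hp a
  · rw [MLA_of_le (by omega) hge, MLA_of_le he hge, if_pos (by linarith)]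
    linarith

end MLA

section Decoding

noncomputable def ltcDecode (d : ℕ → Bool) (E : ℤ) (m : ℕ) : ℝ :=
  ∑ l ∈ range m, if d l then (2 : ℝ) ^ (E - l) else 0

theorem ltcDecode_succ (d : ℕ → Bool) (E : ℤ) (m : ℕ) :
    ltcDecode d E (m + 1) = ltcDecode d E m + if d m then (2 : ℝ) ^ (E - m) else 0 :=
  sum_range_succ _ m

theorem ltcDecode_eq_MLA_of_greedy {d : ℕ → Bool} {E : ℤ} {a : ℝ}
    (hd : ∀ m, d m = true ↔ (2 : ℝ) ^ (E - m) ≤ a - ltcDecode d E m) (m : ℕ) :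
    ltcDecode d E m = MLA (E + 1 - m) E a := by
  induction m with
  | zero => simp [ltcDecode, MLA_add_one_self]
  | succ m ih =>
    rw [ltcDecode_succ, show E + 1 - ((m + 1 : ℕ) : ℤ) = E + 1 - m - 1 by push_cast; ring,
      MLA_sub_one (by omega), ← ih, show E + 1 - (m : ℤ) - 1 = E - m by ring]
    simp only [hd m]

theorem sum_range_mul_sum_ite_mem {R ι : Type*} [CommSemiring R] [Fintype ι] (w : ι → R)
    (F : ι → Finset ℕ) (f : ℕ → R) {T : ℕ} (hF : ∀ i, F i ⊆ range T) :
    ∑ j ∈ range T, f j * (∑ i, if j ∈ F i then w i else 0) =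
      ∑ i, w i * ∑ t ∈ F i, f t := by
  simp_rw [mul_sum, mul_ite, mul_zero]
  rw [sum_comm]
  refine sum_congr rfl fun i _ => ?_
  rw [sum_ite_mem, inter_eq_right.mpr (hF i)]
  exact sum_congr rfl fun t _ => mul_comm _ _

end Decoding

section Dynamics

theorem two_zpow_eq_pow_mul_zpow_sub (E : ℤ) (m : ℕ) : (2 : ℝ) ^ E = 2 ^ m * 2 ^ (E - m) := by
  rw [← zpow_natCast, ← zpow_add₀ two_ne_zero]
  ring_nf

variable {u x : ℕ → ℝ} {s : ℕ → Bool}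

theorem potential_eq_sum_of_no_spike {θ : ℝ} (hu0 : u 0 = x 0)
    (hu : ∀ k, u (k + 1) = 2 * (u k - if s k then θ else 0) + x (k + 1))
    {k : ℕ} (hk : ∀ j < k, s j = false) :
    u k = ∑ j ∈ range (k + 1), (2 : ℝ) ^ ((k : ℤ) - j) * x j := by
  induction k with
  | zero => simp [hu0]
  | succ k ih =>
    rw [hu k, ih fun j hj => hk j (by omega), hk k (by omega), sum_range_succ _ (k + 1), mul_sub,
      mul_sum]
    simp only [Bool.false_eq_true, ite_false, mul_zero, sub_zero, sub_self, zpow_zero, one_mul]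
    congr 1
    refine sum_congr rfl fun j _ => ?_
    rw [Nat.cast_succ, show (k : ℤ) + 1 - j = (k - j) + 1 by ring, zpow_add_one₀ two_ne_zero]
    ring

theorem potential_eq_of_no_input {E : ℤ}
    (hu : ∀ k, u (k + 1) = 2 * (u k - if s k then (2 : ℝ) ^ E else 0) + x (k + 1))
    {N : ℕ} (hx : ∀ k, N < k → x k = 0) (m : ℕ) :
    u (N + m) = 2 ^ m * (u N - ltcDecode (fun l => s (N + l)) E m) := by
  induction m with
  | zero => simp [ltcDecode]
  | succ m ih =>
    rw [← add_assoc, hu, ih, hx _ (by omega), ltcDecode_succ, two_zpow_eq_pow_mul_zpow_sub E m]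
    split_ifs <;> ring

theorem spike_iff_of_no_input {E : ℤ} (hs : ∀ k, s k = true ↔ (2 : ℝ) ^ E ≤ u k)
    (hu : ∀ k, u (k + 1) = 2 * (u k - if s k then (2 : ℝ) ^ E else 0) + x (k + 1))
    {N : ℕ} (hx : ∀ k, N < k → x k = 0) (m : ℕ) :
    s (N + m) = true ↔ (2 : ℝ) ^ (E - m) ≤ u N - ltcDecode (fun l => s (N + l)) E m := by
  rw [hs, potential_eq_of_no_input hu hx m, two_zpow_eq_pow_mul_zpow_sub E m,
    mul_le_mul_iff_right₀ (by positivity)]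

end Dynamics

/-- Theorem 1, multi-spike case: a multi-spike EF neuron performs the
computation of an analog ReLU neuron and encodes the result in its output
LTC spike train within its output time window, provided all input spikes
arrive within the input time window and no output spike is fired before the
beginning of the output time window. -/
theorem EF_neuron_computes_ReLU
    (e0min e0max Emin Emax : ℤ) (h0 : e0min ≤ e0max) (hE : Emin ≤ Emax)
    (Tin Tout : ℕ)
    (hTin : (Tin : ℤ) = e0max - e0min + 1)
    (hTout : (Tout : ℤ) = Emax - Emin + 1)
    (ι : Type*) [Fintype ι] (w : ι → ℝ) (F : ι → Finset ℕ)
    (hF : ∀ i, F i ⊆ Finset.range Tin)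
    (I : ℕ → ℝ) (hI : ∀ k, I k = ∑ i, if k ∈ F i then w i else 0)
    (u : ℕ → ℝ) (s : ℕ → Bool)
    (hu0 : u 0 = (2:ℝ)^e0min * I 0)
    (hs : ∀ k, s k = true ↔ (2:ℝ)^Emax ≤ u k)
    (hu : ∀ k, u (k+1) =
      2 * (u k - (if s k then (2:ℝ)^Emax else 0)) + (2:ℝ)^e0min * I (k+1))
    (hearly : ∀ k, k < Tin - 1 → s k = false) :
    ∑ k ∈ Finset.Icc (Tin - 1) (Tin + Tout - 2),
        (if s k then (2:ℝ)^(Emax - ((k:ℤ) - ((Tin:ℤ) - 1))) else 0)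
      = MLA Emin Emax
          (max (∑ i, w i * ∑ t ∈ F i, (2:ℝ)^(e0max - (t:ℤ))) 0) := by
  obtain ⟨N, rfl⟩ : ∃ N, Tin = N + 1 := ⟨Tin - 1, by omega⟩
  obtain ⟨T, rfl⟩ : ∃ T, Tout = T + 1 := ⟨Tout - 1, by omega⟩
  have hx : ∀ k, N < k → (2 : ℝ) ^ e0min * I k = 0 := fun k hk => by
    rw [hI, sum_eq_zero fun i _ => if_neg fun hki => by have := mem_range.mp (hF i hki); omega,
      mul_zero]
  have huN : u N = ∑ i, w i * ∑ t ∈ F i, (2 : ℝ) ^ (e0max - (t : ℤ)) := by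
    rw [potential_eq_sum_of_no_spike (x := fun k => 2 ^ e0min * I k) hu0 hu
        fun j hj => hearly j (by omega),
      ← sum_range_mul_sum_ite_mem w F _ hF]
    refine sum_congr rfl fun j _ => ?_
    rw [← hI, ← mul_assoc, ← zpow_add₀ two_ne_zero]
    congr 2
    omega
  have hgreedy := huN ▸ spike_iff_of_no_input hs hu hx
  rw [MLA_max_zero, show Emin = Emax + 1 - ((T + 1 : ℕ) : ℤ) by omega,
    ← ltcDecode_eq_MLA_of_greedy hgreedy, ltcDecode, show N + 1 + (T + 1) - 2 = N + T by omega,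
    ← Ico_add_one_right_eq_Icc, sum_Ico_eq_sum_range,
    show N + T + 1 - (N + 1 - 1) = T + 1 by omega]
  refine sum_congr rfl fun l _ => ?_
  push_cast
  ring_nf
end

section
/- (Closed form for the pre-reset membrane potential of a multi-spike EF neuron.) Let E be an integer and V₀ a real number. Define the multi-spike EF dynamics u : ℕ → ℝ and s : ℕ → Bool by u 0 = V₀, s k = (u k ≥ 2^E), and u (k+1) = 2 · (u k − (if s k then 2^E else 0)). Then for every j ∈ ℕ, u j = 2^j · (V₀ − Σ_{k < j, s k = true} 2^{E − k}). -/
/-- Closed form for the pre-reset membrane potential of a multi-spike EF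
neuron. -/
theorem multi_spike_EF_closed_form
    (E : ℤ) (V₀ : ℝ)
    (u : ℕ → ℝ) (s : ℕ → Bool)
    (hu0 : u 0 = V₀)
    (hs : ∀ k, s k = true ↔ (2:ℝ)^E ≤ u k)
    (hu : ∀ k, u (k+1) = 2 * (u k - (if s k then (2:ℝ)^E else 0))) :
    ∀ j : ℕ, u j = 2^j *
      (V₀ - ∑ k ∈ (Finset.range j).filter (fun k => s k = true),
        (2:ℝ)^(E - (k:ℤ))) := by
  intro j
  induction j with
  | zero => simp [hu0]
  | succ n ih =>
    rw [hu n, ih, Finset.range_add_one, Finset.filter_insert]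
    by_cases h : s n = true
    · rw [if_pos h, if_pos h, Finset.sum_insert (by simp)]
      have h2 : (2:ℝ)^(E - (n:ℤ)) = (2:ℝ)^E / 2^n := by
        rw [zpow_sub₀ (by norm_num)]
        norm_num
      rw [h2]
      have hn : (2:ℝ)^n ≠ 0 := by positivity
      field_simp
      ring
    · simp only [if_neg h]
      ring
end

section
/- (Spike-time characterization for a multi-spike EF neuron.) Let E be an integer and V₀ a real number. Define the multi-spike EF dynamics u : ℕ → ℝ and s : ℕ → Bool by u 0 = V₀, s k = (u k ≥ 2^E), and u (k+1) = 2 · (u k − (if s k then 2^E else 0)). Then for every j ∈ ℕ, s j = true if and only if V₀ − Σ_{k < j, s k = true} 2^{E − k} ≥ 2^{E − j}. -/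
/-- Spike-time characterization for a multi-spike EF neuron. -/
theorem multi_spike_EF_spike_time_characterization
    (E : ℤ) (V₀ : ℝ)
    (u : ℕ → ℝ) (s : ℕ → Bool)
    (hu0 : u 0 = V₀)
    (hs : ∀ k, s k = true ↔ (2:ℝ)^E ≤ u k)
    (hu : ∀ k, u (k+1) = 2 * (u k - (if s k then (2:ℝ)^E else 0))) :
    ∀ j : ℕ, s j = true ↔
      (2:ℝ)^(E - (j:ℤ)) ≤
        V₀ - ∑ k ∈ (Finset.range j).filter (fun k => s k = true),
          (2:ℝ)^(E - (k:ℤ)) := by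
  have key : ∀ j : ℕ, u j = (2:ℝ)^(j:ℤ) *
      (V₀ - ∑ k ∈ (Finset.range j).filter (fun k => s k = true),
        (2:ℝ)^(E - (k:ℤ))) := by
    intro j
    induction j with
    | zero => simp [hu0]
    | succ n ih =>
      rw [hu n, ih]
      rw [Finset.sum_filter, Finset.sum_filter, Finset.sum_range_succ]
      push_cast
      have h2n : (2:ℝ)^(n:ℤ) ≠ 0 := by positivity
      by_cases h : s n = true
      · simp only [h, if_true]
        have : (2:ℝ)^E = (2:ℝ)^(n:ℤ) * (2:ℝ)^(E - (n:ℤ)) := by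
          rw [← zpow_add₀ (by norm_num : (2:ℝ) ≠ 0)]; ring_nf
        rw [this, zpow_add₀ (by norm_num : (2:ℝ) ≠ 0)]
        ring
      · simp only [h, Bool.false_eq_true, if_false]
        rw [zpow_add₀ (by norm_num : (2:ℝ) ≠ 0)]
        ring
  intro j
  rw [hs j, key j]
  have h2 : (0:ℝ) < (2:ℝ)^(j:ℤ) := by positivity
  rw [mul_comm, ← div_le_iff₀ h2, ← zpow_sub₀ (by norm_num : (2:ℝ) ≠ 0)]
end

section
/- (Greedy binary expansion equals truncated binary expansion.) Let a be a real number and m an integer with 2^m ≤ a. Then there exists a finite set S of integers such that: (i) every e ∈ S satisfies e ≥ m; (ii) Σ_{e ∈ S} 2^e = 2^m · ⌊a / 2^m⌋; (iii) the maximal element of S is ⌊log₂ a⌋ (in particular S is nonempty); and (iv) for every e ∈ S, e = ⌊log₂ (a − Σ_{e' ∈ S, e' > e} 2^{e'})⌋, where ⌊log₂ x⌋ denotes Int.log 2 x; i.e., S is produced by the greedy algorithm that repeatedly subtracts the largest power of two not exceeding the remainder, stopped once the remainder drops below 2^m. -/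
/-!
Let `k = ⌊log₂ a⌋`. The remainder `a - 2 ^ k` is `< 2 ^ k`, so every exponent of its greedy
expansion is `< k`, and inserting `k` gives the greedy expansion of `a`. Since `2 ^ k` is a
multiple of `2 ^ m`, subtracting it lowers `⌊a / 2 ^ m⌋` by exactly `2 ^ (k - m)`, which keeps the
sum identity. The recursion stops with the empty expansion once the remainder is below `2 ^ m`.
-/

theorem zpow_mul_floor_add_zpow_div {b : ℕ} (hb : b ≠ 0) (x : ℝ) {m k : ℤ} (hmk : m ≤ k) :
    (b : ℝ) ^ m * ⌊(x + (b : ℝ) ^ k) / (b : ℝ) ^ m⌋ =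
      (b : ℝ) ^ m * ⌊x / (b : ℝ) ^ m⌋ + (b : ℝ) ^ k := by
  obtain ⟨n, rfl⟩ := Int.le.dest hmk
  have hbm : (b : ℝ) ^ m ≠ 0 := zpow_ne_zero _ (by exact_mod_cast hb)
  have hdiv : (x + (b : ℝ) ^ (m + n)) / (b : ℝ) ^ m = x / (b : ℝ) ^ m + ((b ^ n : ℕ) : ℝ) := by
    rw [zpow_add₀ (by exact_mod_cast hb), add_div, mul_div_cancel_left₀ _ hbm]
    norm_cast
  rw [hdiv, Int.floor_add_natCast, zpow_add₀ (by exact_mod_cast hb)]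
  push_cast
  rw [zpow_natCast]
  ring

theorem sub_two_zpow_log_lt (a : ℝ) : a - (2 : ℝ) ^ Int.log 2 a < (2 : ℝ) ^ Int.log 2 a := by
  have := Int.lt_zpow_succ_log_self (R := ℝ) one_lt_two a
  rw [Nat.cast_ofNat, zpow_add_one₀ two_ne_zero] at this
  linarith

structure IsGreedyBinaryExpansion (a : ℝ) (m : ℤ) (S : Finset ℤ) : Prop where
  le_of_mem : ∀ e ∈ S, m ≤ e
  sum_eq : ∑ e ∈ S, (2 : ℝ) ^ e = (2 : ℝ) ^ m * ⌊a / (2 : ℝ) ^ m⌋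
  eq_log : ∀ e ∈ S, e = Int.log 2 (a - ∑ e' ∈ S with e < e', (2 : ℝ) ^ e')

namespace IsGreedyBinaryExpansion

variable {a : ℝ} {m : ℤ} {S : Finset ℤ}

theorem empty (ha : 0 ≤ a) (ham : a < (2 : ℝ) ^ m) : IsGreedyBinaryExpansion a m ∅ where
  le_of_mem := by simp
  sum_eq := by
    have hpos : (0 : ℝ) < (2 : ℝ) ^ m := by positivity
    rw [Int.floor_eq_zero_iff.mpr ⟨div_nonneg ha hpos.le, (div_lt_one hpos).mpr ham⟩]
    simp
  eq_log := by simp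

theorem zpow_le (hS : IsGreedyBinaryExpansion a m S) {e : ℤ} (he : e ∈ S) : (2 : ℝ) ^ e ≤ a :=
  calc (2 : ℝ) ^ e
    _ ≤ ∑ e ∈ S, (2 : ℝ) ^ e := Finset.single_le_sum (fun _ _ ↦ by positivity) he
    _ = (2 : ℝ) ^ m * ⌊a / (2 : ℝ) ^ m⌋ := hS.sum_eq
    _ ≤ (2 : ℝ) ^ m * (a / (2 : ℝ) ^ m) := by gcongr; exact Int.floor_le _
    _ = a := mul_div_cancel₀ _ (by positivity)

theorem insert_log (ham : (2 : ℝ) ^ m ≤ a)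
    (hS : IsGreedyBinaryExpansion (a - (2 : ℝ) ^ Int.log 2 a) m S) :
    IsGreedyBinaryExpansion a m (insert (Int.log 2 a) S) := by
  set k := Int.log 2 a
  have ha : 0 < a := lt_of_lt_of_le (by positivity) ham
  have hmk : m ≤ k := (Int.zpow_le_iff_le_log (R := ℝ) one_lt_two ha).mp (mod_cast ham)
  have hlt : ∀ e ∈ S, e < k := fun e he ↦
    (zpow_lt_zpow_iff_right₀ one_lt_two).mp ((hS.zpow_le he).trans_lt (sub_two_zpow_log_lt a))
  have hk : k ∉ S := fun h ↦ (hlt k h).false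
  refine ⟨?_, ?_, ?_⟩
  · simpa [hmk] using hS.le_of_mem
  · have := zpow_mul_floor_add_zpow_div two_ne_zero (a - (2 : ℝ) ^ k) hmk
    rw [Nat.cast_ofNat, sub_add_cancel] at this
    rw [Finset.sum_insert hk, hS.sum_eq, add_comm, this]
  · intro e he
    rcases Finset.mem_insert.mp he with rfl | he
    · have : (insert k S).filter (k < ·) = ∅ :=
        Finset.filter_eq_empty_iff.mpr fun x hx ↦ by
          rcases Finset.mem_insert.mp hx with rfl | hx
          exacts [lt_irrefl _, (hlt x hx).not_gt]
      simp [k, this]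
    · rw [Finset.filter_insert, if_pos (hlt e he), Finset.sum_insert (by simp [hk])]
      convert hS.eq_log e he using 2
      ring

theorem exists_of_lt_zpow (m : ℤ) (n : ℕ) (ha : 0 ≤ a) (han : a < (2 : ℝ) ^ (m + n)) :
    ∃ S, IsGreedyBinaryExpansion a m S := by
  induction n generalizing a with
  | zero => exact ⟨∅, empty ha (by simpa using han)⟩
  | succ n ih =>
    by_cases ham : a < (2 : ℝ) ^ m
    · exact ⟨∅, empty ha ham⟩
    push Not at ham
    have ha : 0 < a := lt_of_lt_of_le (by positivity) ham
    have hlog : Int.log 2 a ≤ m + n := by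
      have := (Int.lt_zpow_iff_log_lt (R := ℝ) one_lt_two ha).mp (mod_cast han)
      push_cast at this
      omega
    have hle : (2 : ℝ) ^ Int.log 2 a ≤ a := mod_cast Int.zpow_log_le_self (R := ℝ) one_lt_two ha
    obtain ⟨S, hS⟩ := ih (sub_nonneg.mpr hle) <|
      (sub_two_zpow_log_lt a).trans_le (zpow_le_zpow_right₀ one_le_two hlog)
    exact ⟨_, insert_log ham hS⟩

theorem exists_of_nonneg (m : ℤ) (ha : 0 ≤ a) : ∃ S, IsGreedyBinaryExpansion a m S := by
  refine exists_of_lt_zpow m (Int.log 2 a + 1 - m).toNat ha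
    ((Int.lt_zpow_succ_log_self (R := ℝ) one_lt_two a).trans_le ?_)
  rw [Nat.cast_ofNat]
  exact zpow_le_zpow_right₀ one_le_two (by omega)

theorem nonempty (ham : (2 : ℝ) ^ m ≤ a) (hS : IsGreedyBinaryExpansion a m S) : S.Nonempty := by
  have hpos : (0 : ℝ) < (2 : ℝ) ^ m := by positivity
  have hfloor : (1 : ℝ) ≤ ⌊a / (2 : ℝ) ^ m⌋ :=
    mod_cast Int.le_floor.mpr (by simpa [le_div_iff₀ hpos])
  refine Finset.nonempty_of_sum_ne_zero (f := fun e ↦ (2 : ℝ) ^ e) ?_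
  rw [hS.sum_eq]
  exact (mul_pos hpos (one_pos.trans_le hfloor)).ne'

theorem max'_eq_log (hS : IsGreedyBinaryExpansion a m S) (hne : S.Nonempty) :
    S.max' hne = Int.log 2 a := by
  have hempty : S.filter (S.max' hne < ·) = ∅ :=
    Finset.filter_eq_empty_iff.mpr fun x hx ↦ not_lt.mpr (S.le_max' x hx)
  have := hS.eq_log _ (S.max'_mem hne)
  rwa [hempty, Finset.sum_empty, sub_zero] at this

end IsGreedyBinaryExpansion

/-- Greedy binary expansion equals truncated binary expansion: for a real
`a ≥ 2^m`, the truncation `2^m · ⌊a / 2^m⌋` is a sum of distinct powers of two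
with exponents `≥ m`, whose maximal exponent is `⌊log₂ a⌋`, and where each
exponent is obtained greedily as the binary logarithm of the remainder after
subtracting all larger powers. -/
theorem greedy_binary_expansion
    (a : ℝ) (m : ℤ) (h : (2:ℝ)^m ≤ a) :
    ∃ S : Finset ℤ,
      (∀ e ∈ S, m ≤ e) ∧
      (∑ e ∈ S, (2:ℝ)^e = (2:ℝ)^m * (⌊a / (2:ℝ)^m⌋ : ℝ)) ∧
      (∃ hS : S.Nonempty, S.max' hS = Int.log 2 a) ∧
      (∀ e ∈ S, e = Int.log 2
        (a - ∑ e' ∈ S.filter (fun e' => e < e'), (2:ℝ)^e')) := by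
  obtain ⟨S, hS⟩ := IsGreedyBinaryExpansion.exists_of_nonneg m ((zpow_pos two_pos m).le.trans h)
  have hne := hS.nonempty h
  exact ⟨S, hS.le_of_mem, hS.sum_eq, ⟨hne, hS.max'_eq_log hne⟩, hS.eq_log⟩
end

section
/- (Spike-count bound for a multi-spike EF neuron, dynamics form.) Let E be an integer, T ≥ 1 a natural number, and V₀ a real number with 2^{E−(T−1)} ≤ V₀ < 2^{E+1}. Define the multi-spike EF dynamics u : ℕ → ℝ and s : ℕ → Bool by u 0 = V₀, s k = (u k ≥ 2^E), and u (k+1) = 2 · (u k − (if s k then 2^E else 0)). Then the number of indices k with 0 ≤ k ≤ T−1 and s k = true is at most ⌊log₂ V₀⌋ − E + T, where ⌊log₂ V₀⌋ denotes Int.log 2 V₀ (i.e., the cardinality, viewed as an integer, is ≤ Int.log 2 V₀ − (E − (T−1)) + 1). -/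
/-!
Each spike at time `j < k` removes `2^(k-j) θ` from `2^k u₀`, and these weights are distinct powers
of two at least `2`, so `n` spikes remove at least `2θ (2^n - 1)`. Since the potential never goes
negative, `2θ (2^n - 1) ≤ 2^T u₀`; combined with `2θ ≤ 2^T u₀` this gives `θ 2^n ≤ 2^T u₀`,
which is the bound after taking `log₂` with `θ = 2^E`.
-/

namespace MultiSpikeEF

variable {θ : ℝ} {u : ℕ → ℝ} {s : ℕ → Bool}

theorem potential_nonneg (hu : ∀ k, u (k + 1) = 2 * (u k - if s k then θ else 0))
    (hs : ∀ k, s k = true → θ ≤ u k) (hu0 : 0 ≤ u 0) (k : ℕ) : 0 ≤ u k := by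
  induction k with
  | zero => exact hu0
  | succ k ih =>
    rw [hu k]
    cases hsk : s k
    · simpa using ih
    · simpa using hs k hsk

theorem potential_add_pow_count_le (hu : ∀ k, u (k + 1) = 2 * (u k - if s k then θ else 0))
    (hθ : 0 ≤ θ) (k : ℕ) :
    u k + 2 * θ * 2 ^ Nat.count (fun j => s j) k ≤ 2 ^ k * u 0 + 2 * θ := by
  induction k with
  | zero => simp
  | succ k ih =>
    have hpow : (1 : ℝ) ≤ 2 ^ Nat.count (fun j => s j) k := one_le_pow₀ one_le_two
    rw [hu k, Nat.count_succ, pow_succ]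
    cases hsk : s k
    · simp only [Bool.false_eq_true, if_false, add_zero]
      nlinarith
    · simp only [if_true, pow_succ]
      nlinarith

theorem threshold_mul_pow_count_le (hu : ∀ k, u (k + 1) = 2 * (u k - if s k then θ else 0))
    (hs : ∀ k, s k = true → θ ≤ u k) (hθ : 0 ≤ θ) (hu0 : 2 * θ ≤ 2 ^ k * u 0) :
    θ * 2 ^ Nat.count (fun j => s j) k ≤ 2 ^ k * u 0 := by
  have h0 : 0 ≤ u 0 := nonneg_of_mul_nonneg_right (by linarith) (by positivity : (0 : ℝ) < 2 ^ k)
  have := potential_add_pow_count_le hu hθ k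
  have := potential_nonneg hu hs h0 k
  nlinarith

end MultiSpikeEF

theorem multi_spike_EF_spike_count_bound_general
    (E : ℤ) (T : ℕ) (V₀ : ℝ)
    (h1 : (2:ℝ)^(E - ((T:ℤ) - 1)) ≤ V₀)
    (u : ℕ → ℝ) (s : ℕ → Bool)
    (hu0 : u 0 = V₀)
    (hs : ∀ k, s k = true ↔ (2:ℝ)^E ≤ u k)
    (hu : ∀ k, u (k+1) = 2 * (u k - (if s k then (2:ℝ)^E else 0))) :
    ((((Finset.range T).filter (fun k => s k = true)).card : ℤ))
      ≤ Int.log 2 V₀ - (E - ((T:ℤ) - 1)) + 1 := by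
  have hpos : 0 < V₀ := (zpow_pos two_pos _).trans_le h1
  have hthreshold : 2 * (2:ℝ) ^ E ≤ 2 ^ T * V₀ := by
    rwa [show E - ((T:ℤ) - 1) = 1 + E - T by ring, zpow_sub₀ two_ne_zero, zpow_one_add₀ two_ne_zero,
      zpow_natCast, div_le_iff₀' (by positivity)] at h1
  have hcount := MultiSpikeEF.threshold_mul_pow_count_le hu (fun k => (hs k).mp)
    (zpow_pos two_pos E).le (hu0 ▸ hthreshold)
  rw [hu0, Nat.count_eq_card_filter_range] at hcount
  set n := ((Finset.range T).filter (fun k => s k = true)).card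
  suffices (2:ℝ) ^ (E + n - T) ≤ V₀ by
    have := (Int.zpow_le_iff_le_log (b := 2) one_lt_two hpos).mp (by exact_mod_cast this)
    omega
  rw [zpow_sub₀ two_ne_zero, zpow_add₀ two_ne_zero, div_le_iff₀' (by positivity)]
  simpa only [zpow_natCast] using hcount

/-- Spike-count bound for a multi-spike EF neuron, dynamics form: with
`2^(E−(T−1)) ≤ V₀ < 2^(E+1)`, the number of spikes fired during the time
window `{0, …, T−1}` is at most `⌊log₂ V₀⌋ − (E − (T−1)) + 1`. -/
theorem multi_spike_EF_spike_count_bound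
    (E : ℤ) (T : ℕ) (hT : 1 ≤ T) (V₀ : ℝ)
    (h1 : (2:ℝ)^(E - ((T:ℤ) - 1)) ≤ V₀) (h2 : V₀ < (2:ℝ)^(E+1))
    (u : ℕ → ℝ) (s : ℕ → Bool)
    (hu0 : u 0 = V₀)
    (hs : ∀ k, s k = true ↔ (2:ℝ)^E ≤ u k)
    (hu : ∀ k, u (k+1) = 2 * (u k - (if s k then (2:ℝ)^E else 0))) :
    ((((Finset.range T).filter (fun k => s k = true)).card : ℤ))
      ≤ Int.log 2 V₀ - (E - ((T:ℤ) - 1)) + 1 :=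
  multi_spike_EF_spike_count_bound_general E T V₀ h1 u s hu0 hs hu
end

section
/- (A single-spike EF neuron with positive initial potential fires exactly one spike, at the time determined by the binary logarithm.) Let E be an integer and V₀ a real number with V₀ > 0. Define the single-spike EF dynamics u : ℕ → ℝ and s : ℕ → Bool by u 0 = V₀, s k = (u k ≥ 2^E), and u (k+1) = 2 · (if s k then 0 else u k). Then the set {k ∈ ℕ | s k = true} is exactly the singleton {k₀}, where k₀ = max(0, E − ⌊log₂ V₀⌋) and ⌊log₂ V₀⌋ denotes Int.log 2 V₀. -/
/-- A single-spike EF neuron with positive initial potential fires exactly one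
spike, at the time `max 0 (E − ⌊log₂ V₀⌋)`. -/
theorem single_spike_EF_unique_spike_time
    (E : ℤ) (V₀ : ℝ) (hV₀ : 0 < V₀)
    (u : ℕ → ℝ) (s : ℕ → Bool)
    (hu0 : u 0 = V₀)
    (hs : ∀ k, s k = true ↔ (2:ℝ)^E ≤ u k)
    (hu : ∀ k, u (k+1) = 2 * (if s k then 0 else u k)) :
    {k : ℕ | s k = true} = {(max 0 (E - Int.log 2 V₀)).toNat} := by
  set m := Int.log 2 V₀ with hm
  set k₀ : ℕ := (max 0 (E - m)).toNat with hk₀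
  -- key iff: 2^E ≤ 2^k * V₀ ↔ E - k ≤ m
  have key : ∀ k : ℕ, ((2:ℝ)^E ≤ 2^(k:ℤ) * V₀ ↔ E - (k:ℤ) ≤ m) := by
    intro k
    constructor
    · intro h
      have h2 : (2:ℝ)^(E - (k:ℤ)) ≤ V₀ := by
        rw [zpow_sub₀ (by norm_num)]
        rw [div_le_iff₀ (by positivity)]
        linarith [h]
      exact (Int.zpow_le_iff_le_log (by norm_num) hV₀).mp (by exact_mod_cast h2)
    · intro h
      have h2 : (2:ℝ)^(E - (k:ℤ)) ≤ V₀ := by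
        have := Int.zpow_log_le_self (b := 2) (r := V₀) (by norm_num) hV₀
        calc (2:ℝ)^(E - (k:ℤ)) ≤ (2:ℝ)^m :=
              zpow_le_zpow_right₀ (by norm_num) h
          _ ≤ V₀ := by exact_mod_cast this
      have := mul_le_mul_of_nonneg_left h2 (le_of_lt (zpow_pos (by norm_num : (0:ℝ) < 2) (k:ℤ)))
      rw [← zpow_add₀ (by norm_num : (2:ℝ) ≠ 0)] at this
      simpa [add_sub_cancel] using this
  -- k₀ satisfies E - k₀ ≤ m, and k < k₀ → m < E - k
  have hEk₀ : E - (k₀:ℤ) ≤ m := by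
    rcases le_or_gt (E - m) 0 with h | h
    · have : k₀ = 0 := by simp [hk₀, max_eq_left h]
      rw [this]; push_cast; linarith
    · have : (k₀:ℤ) = E - m := by
        rw [hk₀, max_eq_right h.le, Int.toNat_of_nonneg h.le]
      omega
  have hlt : ∀ k : ℕ, k < k₀ → m < E - (k:ℤ) := by
    intro k hk
    have : (k:ℤ) < (k₀:ℤ) := by exact_mod_cast hk
    have hk₀le : (k₀:ℤ) = max 0 (E - m) := Int.toNat_of_nonneg (le_max_left 0 _)
    omega
  -- u k = 2^k * V₀ and s k = false for k < k₀; also u k₀ = 2^k₀ * V₀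
  have huval : ∀ k : ℕ, k ≤ k₀ → u k = 2^(k:ℤ) * V₀ := by
    intro k
    induction k with
    | zero => intro _; simpa using hu0
    | succ n ih =>
      intro hle
      have hn : n < k₀ := Nat.lt_of_succ_le hle
      have hun : u n = 2^(n:ℤ) * V₀ := ih hn.le
      have hsn : s n = false := by
        rw [Bool.eq_false_iff]
        intro hst
        have := (hs n).mp hst
        rw [hun, key n] at this
        exact absurd this (by have := hlt n hn; omega)
      rw [hu n, hsn, if_neg (by simp), hun]
      push_cast
      rw [zpow_add₀ (by norm_num : (2:ℝ) ≠ 0)]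
      ring
  have hsfalse : ∀ k : ℕ, k < k₀ → s k = false := by
    intro k hk
    rw [Bool.eq_false_iff]
    intro hst
    have := (hs k).mp hst
    rw [huval k hk.le, key k] at this
    have := hlt k hk; omega
  have hstrue : s k₀ = true := by
    rw [hs, huval k₀ le_rfl, key]; exact hEk₀
  -- u k = 0 for k > k₀
  have huzero : ∀ k : ℕ, k₀ < k → u k = 0 := by
    intro k hk
    induction k with
    | zero => omega
    | succ n ih =>
      rcases Nat.lt_or_ge k₀ n with h | h
      · rw [hu n]
        rcases s n with _ | _ <;> simp [ih h]
      · have : n = k₀ := le_antisymm h (Nat.lt_succ_iff.mp hk)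
        rw [hu n, this, hstrue]
        simp
  have hsfalse' : ∀ k : ℕ, k₀ < k → s k = false := by
    intro k hk
    rw [Bool.eq_false_iff]
    intro hst
    have := (hs k).mp hst
    rw [huzero k hk] at this
    exact absurd this (not_le.mpr (zpow_pos (by norm_num : (0:ℝ) < 2) E))
  ext k
  simp only [Set.mem_setOf_eq, Set.mem_singleton_iff]
  constructor
  · intro hk
    by_contra hne
    rcases Nat.lt_or_ge k k₀ with h | h
    · rw [hsfalse k h] at hk; exact absurd hk (by simp)
    · have : k₀ < k := lt_of_le_of_ne h (Ne.symm hne)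
      rw [hsfalse' k this] at hk; exact absurd hk (by simp)
  · intro hk; rw [hk]; exact hstrue
end
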